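/- (Intermediate identity in the proof of the second Proposition of Section 5) In the Section-5 setup below, for all i, j ∈ ℤ one has (d̄Φ_{i,-1}) Φ_{-1,j} = (dΦ_{i,0}) Φ_{0,j-1} (an identity of m×m matrices of 1-forms). -/

import Mathlib

/-- A bidifferential calculus: a unital graded associative algebra
`Ω = ⊕_{r≥0} Ω^r` over a field `𝕂`, together with two `𝕂`-linear graded
derivations `d`, `dbar` of degree one satisfying `d² = d̄² = d d̄ + d̄ d = 0`. -/
structure BidiffCalculus (𝕂 : Type) [Field 𝕂] (Ω : Type) [Ring Ω] [Algebra 𝕂 Ω] where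
  grade : ℕ → Submodule 𝕂 Ω
  internal : DirectSum.IsInternal grade
  one_mem : (1 : Ω) ∈ grade 0
  mul_mem : ∀ (r s : ℕ), ∀ a ∈ grade r, ∀ b ∈ grade s, a * b ∈ grade (r + s)
  d : Ω →ₗ[𝕂] Ω
  dbar : Ω →ₗ[𝕂] Ω
  d_grade : ∀ (r : ℕ), ∀ a ∈ grade r, d a ∈ grade (r + 1)
  dbar_grade : ∀ (r : ℕ), ∀ a ∈ grade r, dbar a ∈ grade (r + 1)
  d_leibniz : ∀ (r : ℕ), ∀ a ∈ grade r, ∀ b : Ω,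
      d (a * b) = d a * b + ((-1 : ℤ) ^ r) • (a * d b)
  dbar_leibniz : ∀ (r : ℕ), ∀ a ∈ grade r, ∀ b : Ω,
      dbar (a * b) = dbar a * b + ((-1 : ℤ) ^ r) • (a * dbar b)
  d_d : ∀ a : Ω, d (d a) = 0
  dbar_dbar : ∀ a : Ω, dbar (dbar a) = 0
  d_dbar_anticomm : ∀ a : Ω, d (dbar a) + dbar (d a) = 0

namespace BidiffCalculus

variable {𝕂 : Type} [Field 𝕂] {Ω : Type} [Ring Ω] [Algebra 𝕂 Ω]

/-- Entrywise action of `d` on matrices over `Ω`. -/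
def matD (S : BidiffCalculus 𝕂 Ω) {m n : ℕ} (M : Matrix (Fin m) (Fin n) Ω) :
    Matrix (Fin m) (Fin n) Ω := M.map S.d

/-- Entrywise action of `dbar` on matrices over `Ω`. -/
def matDbar (S : BidiffCalculus 𝕂 Ω) {m n : ℕ} (M : Matrix (Fin m) (Fin n) Ω) :
    Matrix (Fin m) (Fin n) Ω := M.map S.dbar

/-- A matrix has all entries of degree `r`. -/
def MatIn (S : BidiffCalculus 𝕂 Ω) (r : ℕ) {m n : ℕ} (M : Matrix (Fin m) (Fin n) Ω) : Prop :=
  ∀ i j, M i j ∈ S.grade r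

end BidiffCalculus

/-- `Φ_{i,j} = θ Δ^i Ω̂^{-1} Γ^j η`, with negative powers given by powers of inverses. -/
def Phi {R : Type} [Ring R] {m n : ℕ} (θ : Matrix (Fin m) (Fin n) R)
    (η : Matrix (Fin n) (Fin m) R) (Δ Γ W : (Matrix (Fin n) (Fin n) R)ˣ) (i j : ℤ) :
    Matrix (Fin m) (Fin m) R :=
  θ * Units.val (Δ ^ i) * Units.val W⁻¹ * Units.val (Γ ^ j) * η

namespace BidiffCalculus

variable {𝕂 : Type} [Field 𝕂] {Ω : Type} [Ring Ω] [Algebra 𝕂 Ω] (S : BidiffCalculus 𝕂 Ω)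

lemma d_one : S.d 1 = 0 := by
  have h := S.d_leibniz 0 1 S.one_mem 1
  simp only [mul_one, one_mul, pow_zero, one_smul] at h
  exact (left_eq_add.mp h)

lemma dbar_one : S.dbar 1 = 0 := by
  have h := S.dbar_leibniz 0 1 S.one_mem 1
  simp only [mul_one, one_mul, pow_zero, one_smul] at h
  exact (left_eq_add.mp h)

lemma matD_mul {p q r : ℕ} (M : Matrix (Fin p) (Fin q) Ω) (N : Matrix (Fin q) (Fin r) Ω)
    (hM : S.MatIn 0 M) :
    S.matD (M * N) = S.matD M * N + M * S.matD N := by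
  ext i j
  simp only [matD, Matrix.map_apply, Matrix.add_apply, Matrix.mul_apply]
  rw [map_sum, ← Finset.sum_add_distrib]
  refine Finset.sum_congr rfl fun k _ => ?_
  rw [S.d_leibniz 0 _ (hM i k)]
  simp

lemma matDbar_mul {p q r : ℕ} (M : Matrix (Fin p) (Fin q) Ω) (N : Matrix (Fin q) (Fin r) Ω)
    (hM : S.MatIn 0 M) :
    S.matDbar (M * N) = S.matDbar M * N + M * S.matDbar N := by
  ext i j
  simp only [matDbar, Matrix.map_apply, Matrix.add_apply, Matrix.mul_apply]
  rw [map_sum, ← Finset.sum_add_distrib]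
  refine Finset.sum_congr rfl fun k _ => ?_
  rw [S.dbar_leibniz 0 _ (hM i k)]
  simp

lemma matD_one {p : ℕ} : S.matD (1 : Matrix (Fin p) (Fin p) Ω) = 0 := by
  ext i j
  simp [matD, Matrix.one_apply, apply_ite S.d, d_one]

lemma matDbar_one {p : ℕ} : S.matDbar (1 : Matrix (Fin p) (Fin p) Ω) = 0 := by
  ext i j
  simp [matDbar, Matrix.one_apply, apply_ite S.dbar, dbar_one]

lemma matIn0_mul {p q r : ℕ} {M : Matrix (Fin p) (Fin q) Ω} {N : Matrix (Fin q) (Fin r) Ω}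
    (hM : S.MatIn 0 M) (hN : S.MatIn 0 N) : S.MatIn 0 (M * N) := by
  intro i j
  rw [Matrix.mul_apply]
  exact Submodule.sum_mem _ fun k _ => by simpa using S.mul_mem 0 0 _ (hM i k) _ (hN k j)

lemma matIn0_one {p : ℕ} : S.MatIn 0 (1 : Matrix (Fin p) (Fin p) Ω) := by
  intro i j
  rcases eq_or_ne i j with h | h
  · simpa [Matrix.one_apply, h] using S.one_mem
  · simpa [Matrix.one_apply, h] using Submodule.zero_mem _

lemma matIn0_pow {p : ℕ} {M : Matrix (Fin p) (Fin p) Ω} (hM : S.MatIn 0 M) (k : ℕ) :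
    S.MatIn 0 (M ^ k) := by
  induction k with
  | zero => simpa [pow_zero] using S.matIn0_one
  | succ k ih => rw [pow_succ]; exact S.matIn0_mul ih hM


end BidiffCalculus

namespace BidiffCalculus

variable {𝕂 : Type} [Field 𝕂] {Ω : Type} [Ring Ω] [Algebra 𝕂 Ω] (S : BidiffCalculus 𝕂 Ω)

lemma matIn0_zpow {p : ℕ} (U : (Matrix (Fin p) (Fin p) Ω)ˣ)
    (h : S.MatIn 0 (Units.val U)) (h' : S.MatIn 0 (Units.val U⁻¹)) (i : ℤ) :
    S.MatIn 0 (Units.val (U ^ i)) := by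
  rcases i with k | k
  · rw [Int.ofNat_eq_coe, zpow_natCast, Units.val_pow_eq_pow_val]
    exact S.matIn0_pow h k
  · rw [zpow_negSucc, ← inv_pow, Units.val_pow_eq_pow_val]
    exact S.matIn0_pow h' (k + 1)

lemma matD_unit_inv {p : ℕ} (U : (Matrix (Fin p) (Fin p) Ω)ˣ)
    (h : S.MatIn 0 (Units.val U)) :
    S.matD (Units.val U⁻¹)
      = -(Units.val U⁻¹ * S.matD (Units.val U) * Units.val U⁻¹) := by
  have h0 : S.matD (Units.val U * Units.val U⁻¹) = 0 := by
    rw [Units.mul_inv, S.matD_one]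
  rw [S.matD_mul _ _ h] at h0
  have h1 : Units.val U * S.matD (Units.val U⁻¹)
      = -(S.matD (Units.val U) * Units.val U⁻¹) := by
    exact eq_neg_of_add_eq_zero_right h0
  calc S.matD (Units.val U⁻¹)
      = Units.val U⁻¹ * (Units.val U * S.matD (Units.val U⁻¹)) := by
        rw [← Matrix.mul_assoc, Units.inv_mul, Matrix.one_mul]
    _ = -(Units.val U⁻¹ * S.matD (Units.val U) * Units.val U⁻¹) := by
        rw [h1, Matrix.mul_neg, Matrix.mul_assoc]

lemma matDbar_unit_inv {p : ℕ} (U : (Matrix (Fin p) (Fin p) Ω)ˣ)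
    (h : S.MatIn 0 (Units.val U)) :
    S.matDbar (Units.val U⁻¹)
      = -(Units.val U⁻¹ * S.matDbar (Units.val U) * Units.val U⁻¹) := by
  have h0 : S.matDbar (Units.val U * Units.val U⁻¹) = 0 := by
    rw [Units.mul_inv, S.matDbar_one]
  rw [S.matDbar_mul _ _ h] at h0
  have h1 : Units.val U * S.matDbar (Units.val U⁻¹)
      = -(S.matDbar (Units.val U) * Units.val U⁻¹) := by
    exact eq_neg_of_add_eq_zero_right h0
  calc S.matDbar (Units.val U⁻¹)
      = Units.val U⁻¹ * (Units.val U * S.matDbar (Units.val U⁻¹)) := by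
        rw [← Matrix.mul_assoc, Units.inv_mul, Matrix.one_mul]
    _ = -(Units.val U⁻¹ * S.matDbar (Units.val U) * Units.val U⁻¹) := by
        rw [h1, Matrix.mul_neg, Matrix.mul_assoc]

end BidiffCalculus

namespace BidiffCalculus

variable {𝕂 : Type} [Field 𝕂] {Ω : Type} [Ring Ω] [Algebra 𝕂 Ω] (S : BidiffCalculus 𝕂 Ω)

lemma dbar_step {p : ℕ} (D lam X u : Matrix (Fin p) (Fin p) Ω) (hX : S.MatIn 0 X)
    (hXd : S.matDbar X = S.matD X * D - lam * X + X * lam)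
    (hud : S.matDbar u = S.matD u * D - lam * u + u * lam)
    (hcomm : D * u = u * D) :
    S.matDbar (X * u) = S.matD (X * u) * D - lam * (X * u) + (X * u) * lam := by
  rw [S.matDbar_mul _ _ hX, S.matD_mul _ _ hX, hXd, hud]
  have key : S.matD X * D * u = S.matD X * u * D := by
    rw [mul_assoc, hcomm, ← mul_assoc]
  calc (S.matD X * D - lam * X + X * lam) * u
        + X * (S.matD u * D - lam * u + u * lam)
      = S.matD X * D * u + (X * (S.matD u * D) - lam * (X * u) + X * u * lam) := by
        noncomm_ring
    _ = S.matD X * u * D + (X * (S.matD u * D) - lam * (X * u) + X * u * lam) := by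
        rw [key]
    _ = (S.matD X * u + X * S.matD u) * D - lam * (X * u) + X * u * lam := by
        noncomm_ring

lemma dbar_inv_rel {p : ℕ} (U : (Matrix (Fin p) (Fin p) Ω)ˣ)
    (lam : Matrix (Fin p) (Fin p) Ω) (hU : S.MatIn 0 (Units.val U))
    (heq : S.matDbar (Units.val U) = S.matD (Units.val U) * Units.val U
        - lam * Units.val U + Units.val U * lam) :
    S.matDbar (Units.val U⁻¹) = S.matD (Units.val U⁻¹) * Units.val U
        - lam * Units.val U⁻¹ + Units.val U⁻¹ * lam := by
  have c1 : Units.val U * Units.val U⁻¹ = (1 : Matrix (Fin p) (Fin p) Ω) := Units.mul_inv U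
  have c2 : Units.val U⁻¹ * Units.val U = (1 : Matrix (Fin p) (Fin p) Ω) := Units.inv_mul U
  rw [S.matDbar_unit_inv U hU, S.matD_unit_inv U hU, heq]
  calc -(Units.val U⁻¹ * (S.matD (Units.val U) * Units.val U - lam * Units.val U
            + Units.val U * lam) * Units.val U⁻¹)
      = -(Units.val U⁻¹ * S.matD (Units.val U) * (Units.val U * Units.val U⁻¹))
          + Units.val U⁻¹ * lam * (Units.val U * Units.val U⁻¹)
          - (Units.val U⁻¹ * Units.val U) * (lam * Units.val U⁻¹) := by noncomm_ring
    _ = -(Units.val U⁻¹ * S.matD (Units.val U)) + Units.val U⁻¹ * lam - lam * Units.val U⁻¹ := by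
        rw [c1, c2]; noncomm_ring
    _ = -(Units.val U⁻¹ * S.matD (Units.val U) * Units.val U⁻¹) * Units.val U
          - lam * Units.val U⁻¹ + Units.val U⁻¹ * lam := by
        have c3 : -(Units.val U⁻¹ * S.matD (Units.val U) * Units.val U⁻¹) * Units.val U
            = -(Units.val U⁻¹ * S.matD (Units.val U) * (Units.val U⁻¹ * Units.val U)) := by
          noncomm_ring
        rw [c3, c2]; noncomm_ring

lemma dbar_zpow {p : ℕ} (U : (Matrix (Fin p) (Fin p) Ω)ˣ)
    (lam : Matrix (Fin p) (Fin p) Ω)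
    (hU : S.MatIn 0 (Units.val U)) (hUi : S.MatIn 0 (Units.val U⁻¹))
    (heq : S.matDbar (Units.val U) = S.matD (Units.val U) * Units.val U
        - lam * Units.val U + Units.val U * lam) (i : ℤ) :
    S.matDbar (Units.val (U ^ i)) = S.matD (Units.val (U ^ i)) * Units.val U
        - lam * Units.val (U ^ i) + Units.val (U ^ i) * lam := by
  induction i using Int.induction_on with
  | zero => simp [S.matD_one, S.matDbar_one]
  | succ k ih =>
      rw [zpow_add_one, Units.val_mul]
      exact S.dbar_step _ _ _ _ (S.matIn0_zpow U hU hUi k) ih heq rfl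
  | pred k ih =>
      rw [show (-(k:ℤ) - 1) = (-(k:ℤ)) - 1 from rfl, zpow_sub_one, Units.val_mul]
      refine S.dbar_step _ _ _ _ (S.matIn0_zpow U hU hUi _) ih
        (S.dbar_inv_rel U lam hU heq) ?_
      rw [Units.mul_inv, Units.inv_mul]

end BidiffCalculus

namespace BidiffCalculus

variable {𝕂 : Type} [Field 𝕂] {Ω : Type} [Ring Ω] [Algebra 𝕂 Ω] (S : BidiffCalculus 𝕂 Ω)

/-- Core algebraic identity (no derivations):
`(1 - θ W⁻¹ Γ⁻¹ η)(θ Δ⁻¹ W⁻¹ Γ^j η) = θ W⁻¹ (Γ⁻¹ Γ^j) η`. -/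
lemma keyB {m n : ℕ} (Dv Di Gv Gi Wv Wi B : Matrix (Fin n) (Fin n) Ω)
    (θ : Matrix (Fin m) (Fin n) Ω) (η : Matrix (Fin n) (Fin m) Ω)
    (hDDi : Dv * Di = 1) (hGiG : Gi * Gv = 1)
    (hWWi : Wv * Wi = 1) (hWiW : Wi * Wv = 1)
    (hSyl : Gv * Wv - Wv * Dv = η * θ) :
    (1 - θ * Wi * Gi * η) * (θ * Di * Wi * B * η) = θ * Wi * (Gi * B) * η := by
  have hY : Wv * (Wi * (B * η)) = B * η := by
    rw [← Matrix.mul_assoc, hWWi, Matrix.one_mul]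
  have syl2 : Gi * ((η * θ) * Di) = Wv * Di - Gi * Wv := by
    rw [← hSyl]
    calc Gi * ((Gv * Wv - Wv * Dv) * Di)
        = Gi * (Gv * (Wv * Di)) - Gi * (Wv * (Dv * Di)) := by
          simp only [Matrix.sub_mul, Matrix.mul_sub, Matrix.mul_assoc]
      _ = Wv * Di - Gi * Wv := by
          rw [← Matrix.mul_assoc Gi Gv, hGiG, Matrix.one_mul, hDDi, Matrix.mul_one]
  have w1 : Gi * (η * (θ * (Di * (Wi * (B * η)))))
      = Wv * (Di * (Wi * (B * η))) - Gi * (B * η) := by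
    have e : Gi * (η * (θ * (Di * (Wi * (B * η)))))
        = (Gi * ((η * θ) * Di)) * (Wi * (B * η)) := by
      simp only [Matrix.mul_assoc]
    rw [e, syl2, Matrix.sub_mul, Matrix.mul_assoc Gi Wv, hY, Matrix.mul_assoc]
  calc (1 - θ * Wi * Gi * η) * (θ * Di * Wi * B * η)
      = θ * (Di * (Wi * (B * η)))
          - θ * (Wi * (Gi * (η * (θ * (Di * (Wi * (B * η))))))) := by
        simp only [Matrix.sub_mul, Matrix.one_mul, Matrix.mul_assoc]
    _ = θ * (Di * (Wi * (B * η)))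
          - (θ * (Wi * (Wv * (Di * (Wi * (B * η))))) - θ * (Wi * (Gi * (B * η)))) := by
        rw [w1, Matrix.mul_sub, Matrix.mul_sub]
    _ = θ * (Wi * (Gi * (B * η))) := by
        rw [← Matrix.mul_assoc Wi Wv, hWiW, Matrix.one_mul]
        abel
    _ = θ * Wi * (Gi * B) * η := by simp only [Matrix.mul_assoc]

end BidiffCalculus

namespace BidiffCalculus

variable {𝕂 : Type} [Field 𝕂] {Ω : Type} [Ring Ω] [Algebra 𝕂 Ω] (S : BidiffCalculus 𝕂 Ω)

/-- Core derivation identity: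
`d̄(θ A W⁻¹ Γ⁻¹ η) = d(θ A W⁻¹ η) (1 - θ W⁻¹ Γ⁻¹ η)`. -/
lemma keyA {m n : ℕ} (Dv Gv Gi Wv Wi A lam kap : Matrix (Fin n) (Fin n) Ω)
    (θ : Matrix (Fin m) (Fin n) Ω) (η : Matrix (Fin n) (Fin m) Ω)
    (hθ0 : S.MatIn 0 θ) (hA0 : S.MatIn 0 A) (hWi0 : S.MatIn 0 Wi) (hGi0 : S.MatIn 0 Gi)
    (hGGi : Gv * Gi = 1) (hGiG : Gi * Gv = 1)
    (hDA : Dv * A = A * Dv)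
    (heqθ : S.matDbar θ = S.matD θ * Dv + θ * lam)
    (heqA : S.matDbar A = S.matD A * Dv - lam * A + A * lam)
    (heqη : S.matDbar η = Gv * S.matD η + kap * η)
    (hdbarWi : S.matDbar Wi = -(Wi * S.matD Wv * Dv * Wi) + Wi * S.matD Gv - Wi * kap
        - lam * Wi - Wi * (S.matD η * θ) * Wi)
    (hdbarGi : S.matDbar Gi = -(S.matD Gv * Gi) + kap * Gi - Gi * kap)
    (hdWi : S.matD Wi = -(Wi * S.matD Wv * Wi))
    (hDWi : Dv * Wi = Wi * Gv - Wi * (η * θ) * Wi) :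
    S.matDbar (θ * A * Wi * Gi * η)
      = S.matD (θ * A * Wi * η) * (1 - θ * Wi * Gi * η) := by
  have h1 : S.MatIn 0 (θ * A) := S.matIn0_mul hθ0 hA0
  have h2 : S.MatIn 0 (θ * A * Wi) := S.matIn0_mul h1 hWi0
  have h3 : S.MatIn 0 (θ * A * Wi * Gi) := S.matIn0_mul h2 hGi0
  have key1 : Dv * (Wi * (Gi * η)) = Wi * η - Wi * (η * (θ * (Wi * (Gi * η)))) := by
    calc Dv * (Wi * (Gi * η)) = (Dv * Wi) * (Gi * η) := by rw [Matrix.mul_assoc]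
      _ = Wi * (Gv * (Gi * η)) - Wi * (η * (θ * (Wi * (Gi * η)))) := by
          rw [hDWi]; simp only [Matrix.sub_mul, Matrix.mul_assoc]
      _ = Wi * η - Wi * (η * (θ * (Wi * (Gi * η)))) := by
          rw [← Matrix.mul_assoc Gv Gi, hGGi, Matrix.one_mul]
  have key0 : Dv * (A * (Wi * (Gi * η))) = A * (Dv * (Wi * (Gi * η))) := by
    rw [← Matrix.mul_assoc, hDA, Matrix.mul_assoc]
  have key2 : Gi * (Gv * S.matD η) = S.matD η := by
    rw [← Matrix.mul_assoc, hGiG, Matrix.one_mul]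
  rw [S.matDbar_mul (θ * A * Wi * Gi) η h3, S.matDbar_mul (θ * A * Wi) Gi h2,
      S.matDbar_mul (θ * A) Wi h1, S.matDbar_mul θ A hθ0,
      heqθ, heqA, heqη, hdbarWi, hdbarGi,
      S.matD_mul (θ * A * Wi) η h2, S.matD_mul (θ * A) Wi h1, S.matD_mul θ A hθ0, hdWi]
  simp only [Matrix.mul_add, Matrix.add_mul, Matrix.sub_mul, Matrix.mul_sub,
    Matrix.neg_mul, Matrix.mul_neg, Matrix.mul_assoc, Matrix.mul_one, Matrix.one_mul]
  rw [key0, key1, key2]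
  simp only [Matrix.mul_add, Matrix.add_mul, Matrix.sub_mul, Matrix.mul_sub,
    Matrix.neg_mul, Matrix.mul_neg, Matrix.mul_assoc, Matrix.mul_one, Matrix.one_mul]
  abel

end BidiffCalculus

open BidiffCalculus in
/-- intermediate identity, Section 5:
`(d̄Φ_{i,-1}) Φ_{-1,j} = (dΦ_{i,0}) Φ_{0,j-1}`. -/
theorem Phi_intermediate_identity
    {𝕂 : Type} [Field 𝕂] [CharZero 𝕂] {Ω : Type} [Ring Ω] [Algebra 𝕂 Ω]
    (S : BidiffCalculus 𝕂 Ω) {m n : ℕ}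
    (Δ Γ W : (Matrix (Fin n) (Fin n) Ω)ˣ)
    (lam kap : Matrix (Fin n) (Fin n) Ω)
    (θ : Matrix (Fin m) (Fin n) Ω) (η : Matrix (Fin n) (Fin m) Ω)
    (hΔ : S.MatIn 0 (Units.val Δ)) (hΔinv : S.MatIn 0 (Units.val Δ⁻¹))
    (hΓ : S.MatIn 0 (Units.val Γ)) (hΓinv : S.MatIn 0 (Units.val Γ⁻¹))
    (hW : S.MatIn 0 (Units.val W)) (hWinv : S.MatIn 0 (Units.val W⁻¹))
    (hlam : S.MatIn 1 lam) (hkap : S.MatIn 1 kap)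
    (hθ : S.MatIn 0 θ) (hη : S.MatIn 0 η)
    (heqΔ : S.matDbar (Units.val Δ) + (lam * Units.val Δ - Units.val Δ * lam)
        = S.matD (Units.val Δ) * Units.val Δ)
    (heqlam : S.matDbar lam + lam * lam = S.matD lam * Units.val Δ)
    (heqΓ : S.matDbar (Units.val Γ) - (kap * Units.val Γ - Units.val Γ * kap)
        = Units.val Γ * S.matD (Units.val Γ))
    (heqkap : S.matDbar kap - kap * kap = Units.val Γ * S.matD kap)
    (heqθ : S.matDbar θ = S.matD θ * Units.val Δ + θ * lam)
    (heqη : S.matDbar η = Units.val Γ * S.matD η + kap * η)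
    (hSyl : Units.val Γ * Units.val W - Units.val W * Units.val Δ = η * θ)
    (heqW : S.matDbar (Units.val W) = S.matD (Units.val W) * Units.val Δ
        - S.matD (Units.val Γ) * Units.val W + kap * Units.val W + Units.val W * lam
        + S.matD η * θ) :
    ∀ i j : ℤ,
      S.matDbar (Phi θ η Δ Γ W i (-1)) * Phi θ η Δ Γ W (-1) j
        = S.matD (Phi θ η Δ Γ W i 0) * Phi θ η Δ Γ W 0 (j - 1) := by
  intro i j
  -- abbreviations
  have e1 : Phi θ η Δ Γ W i (-1)
      = θ * Units.val (Δ ^ i) * Units.val W⁻¹ * Units.val Γ⁻¹ * η := by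
    rw [Phi, zpow_neg_one]
  have e2 : Phi θ η Δ Γ W (-1) j
      = θ * Units.val Δ⁻¹ * Units.val W⁻¹ * Units.val (Γ ^ j) * η := by
    rw [Phi, zpow_neg_one]
  have e3 : Phi θ η Δ Γ W i 0
      = θ * Units.val (Δ ^ i) * Units.val W⁻¹ * η := by
    rw [Phi, zpow_zero, Units.val_one, Matrix.mul_one]
  have e4 : Phi θ η Δ Γ W 0 (j - 1)
      = θ * Units.val W⁻¹ * Units.val (Γ ^ (j - 1)) * η := by
    rw [Phi, zpow_zero, Units.val_one, Matrix.mul_one]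
  -- cancellation facts
  have cDDi : Units.val Δ * Units.val Δ⁻¹ = (1 : Matrix (Fin n) (Fin n) Ω) := Units.mul_inv Δ
  have cGGi : Units.val Γ * Units.val Γ⁻¹ = (1 : Matrix (Fin n) (Fin n) Ω) := Units.mul_inv Γ
  have cGiG : Units.val Γ⁻¹ * Units.val Γ = (1 : Matrix (Fin n) (Fin n) Ω) := Units.inv_mul Γ
  have cWWi : Units.val W * Units.val W⁻¹ = (1 : Matrix (Fin n) (Fin n) Ω) := Units.mul_inv W
  have cWiW : Units.val W⁻¹ * Units.val W = (1 : Matrix (Fin n) (Fin n) Ω) := Units.inv_mul W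
  -- derived derivative formulas
  have heqΔ' : S.matDbar (Units.val Δ) = S.matD (Units.val Δ) * Units.val Δ
      - lam * Units.val Δ + Units.val Δ * lam := by
    rw [eq_sub_of_add_eq heqΔ]; noncomm_ring
  have heqA := S.dbar_zpow Δ lam hΔ hΔinv heqΔ' i
  have heqΓ' : S.matDbar (Units.val Γ) = Units.val Γ * S.matD (Units.val Γ)
      + kap * Units.val Γ - Units.val Γ * kap := by
    rw [eq_add_of_sub_eq heqΓ]; noncomm_ring
  have hdbarGi : S.matDbar (Units.val Γ⁻¹) = -(S.matD (Units.val Γ) * Units.val Γ⁻¹)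
      + kap * Units.val Γ⁻¹ - Units.val Γ⁻¹ * kap := by
    rw [S.matDbar_unit_inv Γ hΓ, heqΓ']
    calc -(Units.val Γ⁻¹ * (Units.val Γ * S.matD (Units.val Γ) + kap * Units.val Γ
            - Units.val Γ * kap) * Units.val Γ⁻¹)
        = -((Units.val Γ⁻¹ * Units.val Γ) * (S.matD (Units.val Γ) * Units.val Γ⁻¹))
            - (Units.val Γ⁻¹ * kap) * (Units.val Γ * Units.val Γ⁻¹)
            + (Units.val Γ⁻¹ * Units.val Γ) * (kap * Units.val Γ⁻¹) := by noncomm_ring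
      _ = -(S.matD (Units.val Γ) * Units.val Γ⁻¹) + kap * Units.val Γ⁻¹
            - Units.val Γ⁻¹ * kap := by rw [cGiG, cGGi]; noncomm_ring
  have hdbarWi : S.matDbar (Units.val W⁻¹)
      = -(Units.val W⁻¹ * S.matD (Units.val W) * Units.val Δ * Units.val W⁻¹)
        + Units.val W⁻¹ * S.matD (Units.val Γ) - Units.val W⁻¹ * kap
        - lam * Units.val W⁻¹ - Units.val W⁻¹ * (S.matD η * θ) * Units.val W⁻¹ := by
    rw [S.matDbar_unit_inv W hW, heqW]
    calc -(Units.val W⁻¹ * (S.matD (Units.val W) * Units.val Δ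
            - S.matD (Units.val Γ) * Units.val W + kap * Units.val W + Units.val W * lam
            + S.matD η * θ) * Units.val W⁻¹)
        = -(Units.val W⁻¹ * S.matD (Units.val W) * Units.val Δ * Units.val W⁻¹)
            + (Units.val W⁻¹ * S.matD (Units.val Γ)) * (Units.val W * Units.val W⁻¹)
            - (Units.val W⁻¹ * kap) * (Units.val W * Units.val W⁻¹)
            - (Units.val W⁻¹ * Units.val W) * (lam * Units.val W⁻¹)
            - Units.val W⁻¹ * (S.matD η * θ) * Units.val W⁻¹ := by noncomm_ring
      _ = _ := by rw [cWWi, cWiW]; noncomm_ring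
  have hdWi := S.matD_unit_inv W hW
  have hDWi : Units.val Δ * Units.val W⁻¹
      = Units.val W⁻¹ * Units.val Γ - Units.val W⁻¹ * (η * θ) * Units.val W⁻¹ := by
    have h := congrArg (fun X => Units.val W⁻¹ * X * Units.val W⁻¹) hSyl
    calc Units.val Δ * Units.val W⁻¹
        = (Units.val W⁻¹ * Units.val W) * (Units.val Δ * Units.val W⁻¹) := by
          rw [cWiW, Matrix.one_mul]
      _ = (Units.val W⁻¹ * Units.val Γ) * (Units.val W * Units.val W⁻¹)
            - Units.val W⁻¹ * (Units.val Γ * Units.val W - Units.val W * Units.val Δ)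
              * Units.val W⁻¹ := by noncomm_ring
      _ = Units.val W⁻¹ * Units.val Γ - Units.val W⁻¹ * (η * θ) * Units.val W⁻¹ := by
          rw [cWWi, hSyl]; noncomm_ring
  have hDA : Units.val Δ * Units.val (Δ ^ i) = Units.val (Δ ^ i) * Units.val Δ := by
    rw [← Units.val_mul, ← Units.val_mul, ((Commute.refl Δ).zpow_right i).eq]
  have hA0 := S.matIn0_zpow Δ hΔ hΔinv i
  -- assemble
  rw [e1, e2, e3, e4,
    S.keyA (Units.val Δ) (Units.val Γ) (Units.val Γ⁻¹) (Units.val W) (Units.val W⁻¹)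
      (Units.val (Δ ^ i)) lam kap θ η hθ hA0 hWinv hΓinv cGGi cGiG hDA heqθ heqA heqη
      hdbarWi hdbarGi hdWi hDWi,
    Matrix.mul_assoc,
    BidiffCalculus.keyB (Units.val Δ) (Units.val Δ⁻¹) (Units.val Γ) (Units.val Γ⁻¹) (Units.val W)
      (Units.val W⁻¹) (Units.val (Γ ^ j)) θ η cDDi cGiG cWWi cWiW hSyl]
  have hGiB : Units.val Γ⁻¹ * Units.val (Γ ^ j) = Units.val (Γ ^ (j - 1)) := by
    rw [← Units.val_mul]
    congr 1
    rw [← zpow_neg_one, ← zpow_add]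
    congr 1
    omega
  rw [hGiB]
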